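/- arXiv:2109.10845 — 2 statements merged into one kernel-verified Lean document; each statement's English description precedes it below -/
import Mathlib

section
/- Let b, c be positive integers with b ≤ c, c = bd + e, 0 ≤ e < b, and let Q_{b,c}(x_1,y_1,x_2,y_2) = ((x_1^b y_2 + y_1^b x_2)^{d+1} − (x_1^b y_2)^{d+1} − (y_1^b x_2)^{d+1}) / (x_1^{b−e} y_1^{b−e}). Then for any commutative ℚ-algebra B, the operation on B^3 given by (x_1,x_2,x_3)*(y_1,y_2,y_3) = (x_1y_1, x_1^b y_2 + y_1^b x_2, x_1^c y_3 + y_1^c x_3 + Q_{b,c}(x_1,y_1,x_2,y_2)) is associative and commutative with identity (1, 0, 0). -/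
/-!
The numerator `P` of `Q_{b,c}` is a coboundary: with `F(x) = x₂^(d+1)` and `n = b(d+1)`,
`P(x, y) = F(x * y) - x₁^n F(y) - y₁^n F(x)`, where `*` is the product on the first two
coordinates. Hence `P` satisfies the weight-`n` cocycle identity, and since `c + (b - e) = n`,
dividing by `(x₁ y₁)^(b - e)` gives the weight-`c` cocycle identity for `Q`, which is
associativity of the third coordinate. The division is only available where `x₁, y₁` are not
zero divisors, so the identities for `Q` are proved at the generic point of a polynomial ring
over `ℤ` and then specialized.
-/

open MvPolynomial

def defect {R : Type*} [CommRing R] (b d : ℕ) (x₁ y₁ x₂ y₂ : R) : R :=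
  (x₁ ^ b * y₂ + y₁ ^ b * x₂) ^ (d + 1) - (x₁ ^ b * y₂) ^ (d + 1) - (y₁ ^ b * x₂) ^ (d + 1)

section
variable {R S : Type*} [CommRing R] [CommRing S] (b d : ℕ)

theorem map_defect {F : Type*} [FunLike F R S] [RingHomClass F R S] (φ : F) (x₁ y₁ x₂ y₂ : R) :
    φ (defect b d x₁ y₁ x₂ y₂) = defect b d (φ x₁) (φ y₁) (φ x₂) (φ y₂) := by
  simp only [defect, map_sub, map_add, map_mul, map_pow]

theorem defect_swap (x₁ y₁ x₂ y₂ : R) : defect b d y₁ x₁ y₂ x₂ = defect b d x₁ y₁ x₂ y₂ := by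
  simp only [defect]; ring

theorem defect_one_zero (y₁ y₂ : R) : defect b d 1 y₁ 0 y₂ = 0 := by
  simp [defect]

theorem defect_cocycle (x₁ y₁ z₁ x₂ y₂ z₂ : R) :
    z₁ ^ (b * (d + 1)) * defect b d x₁ y₁ x₂ y₂
        + defect b d (x₁ * y₁) z₁ (x₁ ^ b * y₂ + y₁ ^ b * x₂) z₂ =
      x₁ ^ (b * (d + 1)) * defect b d y₁ z₁ y₂ z₂
        + defect b d x₁ (y₁ * z₁) x₂ (y₁ ^ b * z₂ + z₁ ^ b * y₂) := by
  simp only [defect, mul_pow, ← pow_mul]; ring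
end

section
variable {R S : Type*} [CommRing R] [CommRing S] {b d f : ℕ} {Q : MvPolynomial (Fin 4) ℤ}

theorem map_aeval_vecCons [Algebra ℤ R] [Algebra ℤ S] {F : Type*} [FunLike F R S]
    [RingHomClass F R S] (φ : F) (x₁ y₁ x₂ y₂ : R) :
    φ (aeval ![x₁, y₁, x₂, y₂] Q) = aeval ![φ x₁, φ y₁, φ x₂, φ y₂] Q := by
  induction Q using MvPolynomial.induction_on with
  | C a => simp
  | add p q hp hq => simp only [map_add, hp, hq]
  | mul_X p i hp =>
    simp only [map_mul, hp, aeval_X]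
    fin_cases i <;> rfl

theorem pow_mul_aeval_eq_defect (hQ : X 0 ^ f * X 1 ^ f * Q = defect b d (X 0) (X 1) (X 2) (X 3))
    (x₁ y₁ x₂ y₂ : R) : (x₁ * y₁) ^ f * aeval ![x₁, y₁, x₂, y₂] Q = defect b d x₁ y₁ x₂ y₂ := by
  simpa [mul_pow, map_defect] using congrArg (aeval ![x₁, y₁, x₂, y₂]) hQ

end

section
variable {S : Type*} [CommRing S] [IsDomain S] {b c d f : ℕ} {Q : MvPolynomial (Fin 4) ℤ}

theorem aeval_swap_of_ne_zero (hQ : X 0 ^ f * X 1 ^ f * Q = defect b d (X 0) (X 1) (X 2) (X 3))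
    {x₁ y₁ : S} (hx : x₁ ≠ 0) (hy : y₁ ≠ 0) (x₂ y₂ : S) :
    aeval ![y₁, x₁, y₂, x₂] Q = aeval ![x₁, y₁, x₂, y₂] Q := by
  refine mul_left_cancel₀ (pow_ne_zero f (mul_ne_zero hy hx)) ?_
  rw [pow_mul_aeval_eq_defect hQ, mul_comm y₁, pow_mul_aeval_eq_defect hQ, defect_swap]

theorem aeval_one_zero_of_ne_zero (hQ : X 0 ^ f * X 1 ^ f * Q = defect b d (X 0) (X 1) (X 2) (X 3))
    {y₁ : S} (hy : y₁ ≠ 0) (y₂ : S) : aeval ![1, y₁, 0, y₂] Q = 0 := by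
  refine mul_left_cancel₀ (pow_ne_zero f (one_mul y₁ ▸ hy)) ?_
  rw [pow_mul_aeval_eq_defect hQ, defect_one_zero, mul_zero]

theorem aeval_cocycle_of_ne_zero (hQ : X 0 ^ f * X 1 ^ f * Q = defect b d (X 0) (X 1) (X 2) (X 3))
    (hcf : c + f = b * (d + 1)) {x₁ y₁ z₁ : S} (hx : x₁ ≠ 0) (hy : y₁ ≠ 0) (hz : z₁ ≠ 0)
    (x₂ y₂ z₂ : S) :
    z₁ ^ c * aeval ![x₁, y₁, x₂, y₂] Q + aeval ![x₁ * y₁, z₁, x₁ ^ b * y₂ + y₁ ^ b * x₂, z₂] Q =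
      x₁ ^ c * aeval ![y₁, z₁, y₂, z₂] Q
        + aeval ![x₁, y₁ * z₁, x₂, y₁ ^ b * z₂ + z₁ ^ b * y₂] Q := by
  refine mul_left_cancel₀ (pow_ne_zero f (mul_ne_zero (mul_ne_zero hx hy) hz)) ?_
  have hxf : x₁ ^ c * x₁ ^ f = x₁ ^ (b * (d + 1)) := by rw [← pow_add, hcf]
  have hzf : z₁ ^ c * z₁ ^ f = z₁ ^ (b * (d + 1)) := by rw [← pow_add, hcf]
  linear_combination z₁ ^ c * z₁ ^ f * pow_mul_aeval_eq_defect hQ x₁ y₁ x₂ y₂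
    + pow_mul_aeval_eq_defect hQ (x₁ * y₁) z₁ (x₁ ^ b * y₂ + y₁ ^ b * x₂) z₂
    - x₁ ^ c * x₁ ^ f * pow_mul_aeval_eq_defect hQ y₁ z₁ y₂ z₂
    - pow_mul_aeval_eq_defect hQ x₁ (y₁ * z₁) x₂ (y₁ ^ b * z₂ + z₁ ^ b * y₂)
    + defect b d x₁ y₁ x₂ y₂ * hzf - defect b d y₁ z₁ y₂ z₂ * hxf
    + defect_cocycle b d x₁ y₁ z₁ x₂ y₂ z₂

end

section
variable {S : Type*} [CommRing S] {b c d f : ℕ} {Q : MvPolynomial (Fin 4) ℤ}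

theorem aeval_swap (hQ : X 0 ^ f * X 1 ^ f * Q = defect b d (X 0) (X 1) (X 2) (X 3))
    (x₁ y₁ x₂ y₂ : S) : aeval ![y₁, x₁, y₂, x₂] Q = aeval ![x₁, y₁, x₂, y₂] Q := by
  simpa only [map_aeval_vecCons, aeval_X, Matrix.cons_val] using
    congrArg (aeval ![x₁, y₁, x₂, y₂])
      (aeval_swap_of_ne_zero hQ (X_ne_zero 0) (X_ne_zero 1) (X 2 : MvPolynomial (Fin 4) ℤ) (X 3))

theorem aeval_one_zero (hQ : X 0 ^ f * X 1 ^ f * Q = defect b d (X 0) (X 1) (X 2) (X 3))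
    (y₁ y₂ : S) : aeval ![1, y₁, 0, y₂] Q = 0 := by
  simpa only [map_aeval_vecCons, map_one, map_zero, aeval_X, Matrix.cons_val] using
    congrArg (aeval ![y₁, y₂])
      (aeval_one_zero_of_ne_zero hQ (X_ne_zero 0) (X 1 : MvPolynomial (Fin 2) ℤ))

theorem aeval_cocycle (hQ : X 0 ^ f * X 1 ^ f * Q = defect b d (X 0) (X 1) (X 2) (X 3))
    (hcf : c + f = b * (d + 1)) (x₁ y₁ z₁ x₂ y₂ z₂ : S) :
    z₁ ^ c * aeval ![x₁, y₁, x₂, y₂] Q + aeval ![x₁ * y₁, z₁, x₁ ^ b * y₂ + y₁ ^ b * x₂, z₂] Q =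
      x₁ ^ c * aeval ![y₁, z₁, y₂, z₂] Q
        + aeval ![x₁, y₁ * z₁, x₂, y₁ ^ b * z₂ + z₁ ^ b * y₂] Q := by
  simpa only [map_aeval_vecCons, map_add, map_mul, map_pow, aeval_X, Matrix.cons_val] using
    congrArg (aeval ![x₁, y₁, z₁, x₂, y₂, z₂])
      (aeval_cocycle_of_ne_zero hQ hcf (X_ne_zero 0) (X_ne_zero 1) (X_ne_zero 2)
        (X 3 : MvPolynomial (Fin 6) ℤ) (X 4) (X 5))

end

open MvPolynomial in
theorem stmt_5_general (b c d e : ℕ) (hc : c = b * d + e) (he : e < b)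
    (Q : MvPolynomial (Fin 4) ℤ)
    (hQ : (X 0 ^ (b - e) * X 1 ^ (b - e) : MvPolynomial (Fin 4) ℤ) * Q =
      (X 0 ^ b * X 3 + X 1 ^ b * X 2) ^ (d + 1)
        - (X 0 ^ b * X 3) ^ (d + 1) - (X 1 ^ b * X 2) ^ (d + 1))
    (B : Type) [CommRing B]
    (mul : (B × B × B) → (B × B × B) → (B × B × B))
    (hmul : ∀ x y, mul x y =
      (x.1 * y.1,
       x.1 ^ b * y.2.1 + y.1 ^ b * x.2.1,
       x.1 ^ c * y.2.2 + y.1 ^ c * x.2.2 +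
         MvPolynomial.aeval (R := ℤ) ![x.1, y.1, x.2.1, y.2.1] Q)) :
    (∀ x y z, mul (mul x y) z = mul x (mul y z)) ∧
    (∀ x y, mul x y = mul y x) ∧
    (∀ x, mul (1, 0, 0) x = x) ∧ (∀ x, mul x (1, 0, 0) = x) := by
  have hcf : c + (b - e) = b * (d + 1) := by rw [hc, Nat.mul_succ]; omega
  have mul_comm' : ∀ x y, mul x y = mul y x := by
    intro x y
    simp only [hmul, Prod.mk.injEq, aeval_swap hQ y.1]
    exact ⟨mul_comm _ _, add_comm _ _, by ring⟩
  have one_mul' : ∀ x, mul (1, 0, 0) x = x := by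
    rintro ⟨x₁, x₂, x₃⟩
    simp [hmul, aeval_one_zero hQ]
  refine ⟨?_, mul_comm', one_mul', fun x => (mul_comm' x _).trans (one_mul' x)⟩
  rintro ⟨x₁, x₂, x₃⟩ ⟨y₁, y₂, y₃⟩ ⟨z₁, z₂, z₃⟩
  simp only [hmul, Prod.mk.injEq]
  refine ⟨mul_assoc _ _ _, by ring, ?_⟩
  linear_combination aeval_cocycle hQ hcf x₁ y₁ z₁ x₂ y₂ z₂

open MvPolynomial in
/-- For `0 < b ≤ c`, `c = bd + e`, `0 ≤ e < b`, and `Q = Q_{b,c}` the polynomial quotient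
`((x₁^b y₂ + y₁^b x₂)^{d+1} − (x₁^b y₂)^{d+1} − (y₁^b x₂)^{d+1}) / (x₁^{b−e} y₁^{b−e})`
(characterized by the equation `hQ`; variables `X 0 = x₁`, `X 1 = y₁`, `X 2 = x₂`, `X 3 = y₂`),
the operation `(x₁,x₂,x₃)*(y₁,y₂,y₃) =
(x₁y₁, x₁^b y₂ + y₁^b x₂, x₁^c y₃ + y₁^c x₃ + Q(x₁,y₁,x₂,y₂))` on `B³` for a commutative
ℚ-algebra `B` is associative and commutative with identity `(1,0,0)`. -/
theorem stmt_5 (b c d e : ℕ) (hb : 0 < b) (hbc : b ≤ c) (hc : c = b * d + e) (he : e < b)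
    (Q : MvPolynomial (Fin 4) ℤ)
    (hQ : (X 0 ^ (b - e) * X 1 ^ (b - e) : MvPolynomial (Fin 4) ℤ) * Q =
      (X 0 ^ b * X 3 + X 1 ^ b * X 2) ^ (d + 1)
        - (X 0 ^ b * X 3) ^ (d + 1) - (X 1 ^ b * X 2) ^ (d + 1))
    (B : Type) [CommRing B] [Algebra ℚ B]
    (mul : (B × B × B) → (B × B × B) → (B × B × B))
    (hmul : ∀ x y, mul x y =
      (x.1 * y.1,
       x.1 ^ b * y.2.1 + y.1 ^ b * x.2.1,
       x.1 ^ c * y.2.2 + y.1 ^ c * x.2.2 +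
         MvPolynomial.aeval (R := ℤ) ![x.1, y.1, x.2.1, y.2.1] Q)) :
    (∀ x y z, mul (mul x y) z = mul x (mul y z)) ∧
    (∀ x y, mul x y = mul y x) ∧
    (∀ x, mul (1, 0, 0) x = x) ∧ (∀ x, mul x (1, 0, 0) = x) :=
  stmt_5_general b c d e hc he Q hQ B mul hmul
end

section
/- Let b,c be positive integers with b ≤ c, c = bd + e, 0 ≤ e < b, and let M be the monoid on K³ (char K = 0) given by (x_1,x_2,x_3)*(y_1,y_2,y_3) = (x_1y_1, x_1^b y_2 + y_1^b x_2, x_1^c y_3 + y_1^c x_3 + Q_{b,c}(x_1,y_1,x_2,y_2)). For a lower triangular matrix (α 0; γ δ) ∈ GL(2,K), the induced birational self-map of M, namely (x_1,x_2,x_3) ↦ (x_1, αx_2, γx_1^{c−b}x_2 + δx_3 + (α^{d+1} − δ)x_1^{e−b}x_2^{d+1}), is a polynomial map if and only if δ = α^{d+1}. -/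
open MvPolynomial in
/-- For `0 < b ≤ c`, `c = bd + e`, `0 ≤ e < b`, and a lower-triangular matrix
`(α 0; γ δ) ∈ GL(2, K)` over a field `K` of characteristic zero, the induced birational
self-map `(x₁,x₂,x₃) ↦ (x₁, αx₂, γx₁^{c−b}x₂ + δx₃ + (α^{d+1} − δ)x₁^{e−b}x₂^{d+1})` of the
monoid with `Q_{b,c}`-twisted multiplication is a polynomial map iff `δ = α^{d+1}`. -/
theorem stmt_17 (K : Type) [Field K] [CharZero K] (b c d e : ℕ)
    (hb : 0 < b) (hbc : b ≤ c) (hc : c = b * d + e) (he : e < b)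
    (α γ δ : K) (hdet : α * δ ≠ 0) :
    (∃ p₁ p₂ p₃ : MvPolynomial (Fin 3) K, ∀ x₁ x₂ x₃ : K, x₁ ≠ 0 →
      MvPolynomial.eval ![x₁, x₂, x₃] p₁ = x₁ ∧
      MvPolynomial.eval ![x₁, x₂, x₃] p₂ = α * x₂ ∧
      MvPolynomial.eval ![x₁, x₂, x₃] p₃ =
        γ * x₁ ^ (c - b) * x₂ + δ * x₃
          + (α ^ (d + 1) - δ) * x₁ ^ ((e : ℤ) - (b : ℤ)) * x₂ ^ (d + 1))
    ↔ δ = α ^ (d + 1) := by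
  constructor
  · rintro ⟨p₁, p₂, p₃, h⟩
    set k := α ^ (d + 1) - δ with hk
    -- one-variable polynomial obtained by substituting x₂ = 1, x₃ = 0
    set q : Polynomial K := MvPolynomial.eval₂ Polynomial.C ![Polynomial.X, 1, 0] p₃ with hq
    have hqeval : ∀ x : K, q.eval x = MvPolynomial.eval ![x, 1, 0] p₃ := by
      intro x
      have := MvPolynomial.eval₂_comp_left (Polynomial.evalRingHom x)
        (Polynomial.C : K →+* Polynomial K) ![Polynomial.X, 1, 0] p₃
      simp only [Polynomial.coe_evalRingHom] at this
      rw [hq, this]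
      have h1 : (Polynomial.evalRingHom x).comp (Polynomial.C : K →+* Polynomial K)
          = RingHom.id K := by ext a; simp
      have h2 : (Polynomial.eval x ∘ ![Polynomial.X, 1, 0]) = ![x, 1, 0] := by
        funext i; fin_cases i <;> simp
      rw [h1, h2, MvPolynomial.eval₂_id]
    set r : Polynomial K := Polynomial.X ^ (b - e) * q
      - Polynomial.C γ * Polynomial.X ^ (c - e) - Polynomial.C k with hr
    have hroot : ∀ x : K, x ≠ 0 → r.eval x = 0 := by
      intro x hx
      obtain ⟨_, _, h3⟩ := h x 1 0 hx
      have hq3 : q.eval x = γ * x ^ (c - b) + k * x ^ ((e : ℤ) - (b : ℤ)) := by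
        rw [hqeval x, h3]; ring
      have hze : x ^ ((e : ℤ) - (b : ℤ)) = x ^ e / x ^ b := by
        rw [zpow_sub₀ hx, zpow_natCast, zpow_natCast]
      have hxb : x ^ (b - e) * x ^ e = x ^ b := by
        rw [← pow_add]; congr 1; omega
      have hxc : x ^ (b - e) * x ^ (c - b) = x ^ (c - e) := by
        rw [← pow_add]; congr 1; omega
      simp only [hr, Polynomial.eval_sub, Polynomial.eval_mul, Polynomial.eval_pow,
        Polynomial.eval_X, Polynomial.eval_C, hq3, hze]
      have hmain : x ^ (b - e) * (γ * x ^ (c - b) + k * (x ^ e / x ^ b))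
          = γ * x ^ (c - e) + k := by
        rw [mul_add,
          show x ^ (b - e) * (γ * x ^ (c - b)) = γ * (x ^ (b - e) * x ^ (c - b)) from by ring,
          hxc,
          show x ^ (b - e) * (k * (x ^ e / x ^ b)) = k * ((x ^ (b - e) * x ^ e) / x ^ b)
            from by ring,
          hxb, div_self (pow_ne_zero _ hx), mul_one]
      rw [hmain]; ring
    have hr0 : r = 0 := by
      apply Polynomial.eq_zero_of_infinite_isRoot
      apply Set.Infinite.mono (s := {x : K | x ≠ 0})
      · intro x hx; exact hroot x hx
      · have : ({x : K | x ≠ 0} : Set K) = {(0 : K)}ᶜ := rfl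
        rw [this]
        exact Set.Finite.infinite_compl (Set.finite_singleton 0)
    have h0 : r.eval 0 = 0 := by rw [hr0]; simp
    have hbe : 0 < b - e := by omega
    have hce : 0 < c - e := by omega
    simp only [hr, Polynomial.eval_sub, Polynomial.eval_mul, Polynomial.eval_pow,
      Polynomial.eval_X, Polynomial.eval_C, zero_pow hbe.ne', zero_pow hce.ne',
      zero_mul, mul_zero, zero_sub, neg_eq_zero] at h0
    have hk0 : k = 0 := by linear_combination -h0
    rw [hk] at hk0
    linear_combination -hk0
  · intro hδ
    refine ⟨X 0, C α * X 1, C γ * X 0 ^ (c - b) * X 1 + C δ * X 2, ?_⟩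
    intro x₁ x₂ x₃ hx₁
    refine ⟨by simp, by simp, ?_⟩
    have : α ^ (d + 1) - δ = 0 := by rw [hδ]; ring
    simp [this]
end
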